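/- arXiv:1402.2262 — 3 statements merged into one kernel-verified Lean document; each statement's English description precedes it below -/
import Mathlib

section
/- Let ]a, b[ be an open interval contained in ℝ \ (U_ν ∪ supp(ν)). Then Ψ_ν coincides with H_ν on ]a, b[ and is strictly increasing on ]a, b[. -/
/-!
On a gap `]a, b[` of `supp ν` with `v_ν = 0`, the integrand of `Ψ_ν` is `(t - x) / (t - x)² = 1 / (t - x)`,
so `Ψ_ν = H_ν`. Letting `v ↓ 0` along admissible values in the infimum defining `v_ν(t) = 0` gives,
by dominated convergence, `∫ dν(x) / (t - x)² ≤ 1`. For `s < t` in the gap,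
`H_ν(t) - H_ν(s) = (t - s) (1 - ∫ dν(x) / ((t - x)(s - x)))`, and by strict AM-GM the last integral
is below the mean of `∫ dν / (t - x)²` and `∫ dν / (s - x)²`, hence below `1`.
-/

open MeasureTheory Filter Topology Set

/-- `v_μ(u) = inf {v ≥ 0 : ∫ dμ(x)/((u−x)² + v²) ≤ 1}`. -/
noncomputable def vF (μ : Measure ℝ) (u : ℝ) : ℝ :=
  sInf {v : ℝ | 0 ≤ v ∧ ∫ x, ((u - x) ^ 2 + v ^ 2)⁻¹ ∂μ ≤ 1}

/-- `U_μ = {t : v_μ(t) > 0}`. -/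
def USet (μ : Measure ℝ) : Set ℝ := {t | 0 < vF μ t}

/-- `H_μ(z) = z + ∫ dμ(x)/(z−x)`. -/
noncomputable def HF (μ : Measure ℝ) (z : ℝ) : ℝ := z + ∫ x, (z - x)⁻¹ ∂μ

/-- `Ψ_μ(t) = t + ∫ (t−x) dμ(x)/((t−x)² + v_μ(t)²)`. -/
noncomputable def PsiF (μ : Measure ℝ) (t : ℝ) : ℝ :=
  t + ∫ x, (t - x) / ((t - x) ^ 2 + vF μ t ^ 2) ∂μ

/-- The (topological) support of a measure on ℝ. -/
def MeasSupp (μ : Measure ℝ) : Set ℝ := {x | ∀ U ∈ nhds x, μ U ≠ 0}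

lemma measSupp_eq_support (μ : Measure ℝ) : MeasSupp μ = μ.support := by
  ext x
  simp [MeasSupp, Measure.mem_support_iff_forall, pos_iff_ne_zero]

lemma ae_mem_measSupp (μ : Measure ℝ) : ∀ᵐ x ∂μ, x ∈ MeasSupp μ :=
  measSupp_eq_support μ ▸ Measure.support_mem_ae

lemma vF_nonneg (μ : Measure ℝ) (t : ℝ) : 0 ≤ vF μ t :=
  Real.sInf_nonneg fun _ hv => hv.1

lemma PsiF_eq_HF_of_vF_eq_zero {μ : Measure ℝ} {t : ℝ} (hv : vF μ t = 0) :
    PsiF μ t = HF μ t := by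
  simp [PsiF, HF, hv, sq, div_self_mul_self']

lemma integral_lt_integral_of_ae_lt {α : Type*} [MeasurableSpace α] {μ : Measure α} [NeZero μ]
    {f g : α → ℝ} (hf : Integrable f μ) (hg : Integrable g μ) (h : ∀ᵐ x ∂μ, f x < g x) :
    ∫ x, f x ∂μ < ∫ x, g x ∂μ := by
  rw [← sub_pos, ← integral_sub hg hf,
    integral_pos_iff_support_of_nonneg_ae (h.mono fun x hx => (sub_nonneg.2 hx.le)) (hg.sub hf)]
  refine pos_iff_ne_zero.2 fun h0 => ?_
  obtain ⟨x, hlt, hx⟩ := (h.and (measure_eq_zero_iff_ae_notMem.1 h0)).exists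
  exact hx (sub_ne_zero.2 hlt.ne')

lemma integral_inv_sub_sq_le_one_of_vF_eq_zero {μ : Measure ℝ} [IsProbabilityMeasure μ] {t : ℝ}
    (hne : ∀ᵐ x ∂μ, x ≠ t) (hint : Integrable (fun x => ((t - x) ^ 2)⁻¹) μ) (hv : vF μ t = 0) :
    ∫ x, ((t - x) ^ 2)⁻¹ ∂μ ≤ 1 := by
  set S := {v : ℝ | 0 ≤ v ∧ ∫ x, ((t - x) ^ 2 + v ^ 2)⁻¹ ∂μ ≤ 1}
  have one_mem : (1 : ℝ) ∈ S := by
    refine ⟨zero_le_one, ?_⟩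
    calc ∫ x, ((t - x) ^ 2 + 1 ^ 2)⁻¹ ∂μ ≤ ∫ _, (1 : ℝ) ∂μ :=
          integral_mono_of_nonneg (.of_forall fun x => by positivity) (integrable_const 1)
            (.of_forall fun x => inv_le_one_of_one_le₀ (by nlinarith [sq_nonneg (t - x)]))
      _ = 1 := by simp
  obtain ⟨v, -, hv_lim, hvS⟩ := exists_seq_tendsto_sInf ⟨1, one_mem⟩ ⟨0, fun v hv => hv.1⟩
  change Tendsto v atTop (𝓝 (vF μ t)) at hv_lim
  rw [hv] at hv_lim
  have hconv : Tendsto (fun n => ∫ x, ((t - x) ^ 2 + v n ^ 2)⁻¹ ∂μ) atTop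
      (𝓝 (∫ x, ((t - x) ^ 2)⁻¹ ∂μ)) := by
    refine tendsto_integral_of_dominated_convergence _ (fun n => by fun_prop) hint
      (fun n => hne.mono fun x hx => ?_) (hne.mono fun x hx => ?_)
    · have hpos : 0 < (t - x) ^ 2 := by positivity [sub_ne_zero.2 hx.symm]
      rw [Real.norm_of_nonneg (by positivity)]
      exact inv_anti₀ hpos (le_add_of_nonneg_right (sq_nonneg _))
    · have hne0 : (t - x) ^ 2 + 0 ^ 2 ≠ 0 := by simpa using sub_ne_zero.2 hx.symm
      simpa using (tendsto_const_nhds.add (hv_lim.pow 2)).inv₀ hne0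
  exact le_of_tendsto' hconv fun n => (hvS n).2

section Separated

variable {μ : Measure ℝ} {s t c d : ℝ}

lemma ae_le_abs_sub_of_notMem_Ioo {a b : ℝ} (hgap : ∀ᵐ x ∂μ, x ∉ Ioo a b) :
    ∀ᵐ x ∂μ, min (t - a) (b - t) ≤ |t - x| := by
  filter_upwards [hgap] with x hx
  rw [mem_Ioo, not_and_or, not_lt, not_lt] at hx
  rcases hx with hx | hx
  · exact (min_le_left _ _).trans ((by linarith : t - a ≤ t - x).trans (le_abs_self _))
  · exact (min_le_right _ _).trans ((by linarith : b - t ≤ -(t - x)).trans (neg_le_abs _))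

lemma ae_ne_of_ae_le_abs_sub (hc : 0 < c) (ht : ∀ᵐ x ∂μ, c ≤ |t - x|) : ∀ᵐ x ∂μ, x ≠ t :=
  ht.mono fun _ hx => (sub_ne_zero.1 (abs_pos.1 (hc.trans_le hx))).symm

lemma integrable_inv_sub_mul_inv_sub [IsFiniteMeasure μ] (hc : 0 < c) (hd : 0 < d)
    (ht : ∀ᵐ x ∂μ, c ≤ |t - x|) (hs : ∀ᵐ x ∂μ, d ≤ |s - x|) :
    Integrable (fun x => (t - x)⁻¹ * (s - x)⁻¹) μ := by
  refine .of_bound (by fun_prop) (c⁻¹ * d⁻¹) ?_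
  filter_upwards [ht, hs] with x hxt hxs
  rw [norm_mul, norm_inv, norm_inv, Real.norm_eq_abs, Real.norm_eq_abs]
  exact mul_le_mul (inv_anti₀ hc hxt) (inv_anti₀ hd hxs) (by positivity) (by positivity)

lemma integrable_inv_sub_sq [IsFiniteMeasure μ] (hc : 0 < c) (ht : ∀ᵐ x ∂μ, c ≤ |t - x|) :
    Integrable (fun x => ((t - x) ^ 2)⁻¹) μ := by
  simpa only [sq, mul_inv] using integrable_inv_sub_mul_inv_sub hc hc ht ht

lemma integrable_inv_sub [IsFiniteMeasure μ] (hc : 0 < c) (ht : ∀ᵐ x ∂μ, c ≤ |t - x|) :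
    Integrable (fun x => (t - x)⁻¹) μ := by
  refine .of_bound (by fun_prop) c⁻¹ ?_
  filter_upwards [ht] with x hx
  rw [norm_inv, Real.norm_eq_abs]
  exact inv_anti₀ hc hx

lemma HF_lt_HF [IsProbabilityMeasure μ] (hc : 0 < c) (hd : 0 < d)
    (hs : ∀ᵐ x ∂μ, c ≤ |s - x|) (ht : ∀ᵐ x ∂μ, d ≤ |t - x|)
    (hIs : ∫ x, ((s - x) ^ 2)⁻¹ ∂μ ≤ 1) (hIt : ∫ x, ((t - x) ^ 2)⁻¹ ∂μ ≤ 1) (hst : s < t) :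
    HF μ s < HF μ t := by
  have hK : ∫ x, (t - x)⁻¹ * (s - x)⁻¹ ∂μ < 1 := by
    have amgm : ∀ᵐ x ∂μ, (t - x)⁻¹ * (s - x)⁻¹ < (((t - x) ^ 2)⁻¹ + ((s - x) ^ 2)⁻¹) / 2 := by
      refine .of_forall fun x => ?_
      have hne : (t - x)⁻¹ ≠ (s - x)⁻¹ := fun h => hst.ne' (by simpa using inv_injective h)
      rw [← inv_pow, ← inv_pow]
      nlinarith [sq_pos_of_ne_zero (sub_ne_zero.2 hne)]
    calc ∫ x, (t - x)⁻¹ * (s - x)⁻¹ ∂μ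
        < ∫ x, (((t - x) ^ 2)⁻¹ + ((s - x) ^ 2)⁻¹) / 2 ∂μ :=
          integral_lt_integral_of_ae_lt (integrable_inv_sub_mul_inv_sub hd hc ht hs)
            (((integrable_inv_sub_sq hd ht).add (integrable_inv_sub_sq hc hs)).div_const 2) amgm
      _ = ((∫ x, ((t - x) ^ 2)⁻¹ ∂μ) + ∫ x, ((s - x) ^ 2)⁻¹ ∂μ) / 2 := by
          rw [integral_div, integral_add (integrable_inv_sub_sq hd ht) (integrable_inv_sub_sq hc hs)]
      _ ≤ 1 := by linarith
  have hdiff : ∫ x, (t - x)⁻¹ ∂μ - ∫ x, (s - x)⁻¹ ∂μ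
      = (s - t) * ∫ x, (t - x)⁻¹ * (s - x)⁻¹ ∂μ := by
    rw [← integral_sub (integrable_inv_sub hd ht) (integrable_inv_sub hc hs), ← integral_const_mul]
    refine integral_congr_ae ?_
    filter_upwards [ae_ne_of_ae_le_abs_sub hc hs, ae_ne_of_ae_le_abs_sub hd ht] with x hxs hxt
    field_simp [sub_ne_zero.2 hxs.symm, sub_ne_zero.2 hxt.symm]
    ring
  rw [HF, HF]
  nlinarith [mul_pos (sub_pos.2 hst) (sub_pos.2 hK)]

end Separated

theorem stmt3_general (ν : Measure ℝ) [IsProbabilityMeasure ν]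
    (a b : ℝ) (hab : Set.Ioo a b ⊆ (USet ν ∪ MeasSupp ν)ᶜ) :
    (∀ t ∈ Set.Ioo a b, PsiF ν t = HF ν t) ∧ StrictMonoOn (PsiF ν) (Set.Ioo a b) := by
  have hgap : ∀ᵐ x ∂ν, x ∉ Ioo a b :=
    (ae_mem_measSupp ν).mono fun x hx hxI => hab hxI (Or.inr hx)
  have hv : ∀ t ∈ Ioo a b, vF ν t = 0 := fun t ht =>
    le_antisymm (not_lt.1 fun h => hab ht (Or.inl h)) (vF_nonneg ν t)
  have hdist : ∀ t ∈ Ioo a b, 0 < min (t - a) (b - t) := fun t ht =>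
    lt_min (sub_pos.2 ht.1) (sub_pos.2 ht.2)
  have hI : ∀ t ∈ Ioo a b, ∫ x, ((t - x) ^ 2)⁻¹ ∂ν ≤ 1 := fun t ht =>
    integral_inv_sub_sq_le_one_of_vF_eq_zero
      (ae_ne_of_ae_le_abs_sub (hdist t ht) (ae_le_abs_sub_of_notMem_Ioo hgap))
      (integrable_inv_sub_sq (hdist t ht) (ae_le_abs_sub_of_notMem_Ioo hgap)) (hv t ht)
  have hPsi : ∀ t ∈ Ioo a b, PsiF ν t = HF ν t := fun t ht => PsiF_eq_HF_of_vF_eq_zero (hv t ht)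
  refine ⟨hPsi, fun s hs t ht hst => ?_⟩
  rw [hPsi s hs, hPsi t ht]
  exact HF_lt_HF (hdist s hs) (hdist t ht) (ae_le_abs_sub_of_notMem_Ioo hgap)
    (ae_le_abs_sub_of_notMem_Ioo hgap) (hI s hs) (hI t ht) hst

/-- On an open interval `]a,b[` contained in the complement of
`U_ν ∪ supp(ν)`, the map `Ψ_ν` coincides with `H_ν` and is strictly increasing. -/
theorem stmt3 (ν : Measure ℝ) [IsProbabilityMeasure ν] (hcomp : IsCompact (MeasSupp ν))
    (a b : ℝ) (hab : Set.Ioo a b ⊆ (USet ν ∪ MeasSupp ν)ᶜ) :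
    (∀ t ∈ Set.Ioo a b, PsiF ν t = HF ν t) ∧ StrictMonoOn (PsiF ν) (Set.Ioo a b) :=
  stmt3_general ν a b hab
end

section
/- Let t ∉ supp(ν) be such that for some δ > 0 one has ]t−δ, t[ ⊂ U_ν and [t, t+δ[ ⊂ ℝ \ U_ν. Then ∫ dν(x)/(t−x)² = 1 and ∫ dν(x)/(t−x)³ > 0. -/
open MeasureTheory Filter Topology Set

/-! Write `G(u) = ∫ dν(x)/(u−x)²`, which is continuous near `t` since `t` is at positive distance
from the support. On `U_ν` the set defining `v_ν(u)` omits `0`, so `G > 1` there; off `U_ν`,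
continuity of `v ↦ ∫ dν(x)/((u−x)² + v²)` at `0` forces `G ≤ 1`. As `t ∉ U_ν` is a limit of points
of `U_ν`, `G(t) = 1`. For small `s > 0` also `G(t + s) ≤ 1 = G(t)`, and strict convexity of
`a ↦ a⁻²` on each half-line gives `G(t + s) > G(t) − 2s ∫ dν(x)/(t−x)³`. -/

section Separation

variable {μ : Measure ℝ} {t ε : ℝ}

lemma exists_ae_le_abs_sub_of_notMem_measSupp (ht : t ∉ MeasSupp μ) :
    ∃ ε > 0, ∀ᵐ x ∂μ, ε ≤ |t - x| := by
  simp only [MeasSupp, mem_ofPred_eq, not_forall, not_not] at ht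
  obtain ⟨U, hU, hU0⟩ := ht
  obtain ⟨ε, hε, hball⟩ := Metric.mem_nhds_iff.1 hU
  refine ⟨ε, hε, ae_iff.2 (measure_mono_null (fun x hx => hball ?_) hU0)⟩
  rw [mem_ofPred_eq, not_le] at hx
  rwa [Metric.mem_ball, Real.dist_eq, abs_sub_comm]

lemma ae_le_abs_sub_of_abs_sub_le (hae : ∀ᵐ x ∂μ, ε ≤ |t - x|) {u r : ℝ} (hu : |u - t| ≤ r) :
    ∀ᵐ x ∂μ, ε - r ≤ |u - x| :=
  hae.mono fun x hx => by linarith [abs_sub_le t u x, abs_sub_comm u t]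

lemma integrable_inv_pow_sub [IsFiniteMeasure μ] (hε : 0 < ε) (hae : ∀ᵐ x ∂μ, ε ≤ |t - x|)
    (n : ℕ) : Integrable (fun x => ((t - x) ^ n)⁻¹) μ := by
  refine (integrable_const (ε ^ n)⁻¹).mono' (by fun_prop) (hae.mono fun x hx => ?_)
  rw [Real.norm_eq_abs, abs_inv, abs_pow]
  exact inv_anti₀ (pow_pos hε n) (pow_le_pow_left₀ hε.le hx n)

lemma continuousAt_integral_inv_sq_add_sq [IsFiniteMeasure μ] (hε : 0 < ε)
    (hae : ∀ᵐ x ∂μ, ε ≤ |t - x|) :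
    ContinuousAt (fun p : ℝ × ℝ => ∫ x, ((p.1 - x) ^ 2 + p.2 ^ 2)⁻¹ ∂μ) (t, 0) := by
  refine continuousAt_of_dominated (bound := fun _ => ((ε / 2) ^ 2)⁻¹)
    (Eventually.of_forall fun p => by fun_prop) ?_ (integrable_const _) ?_
  · filter_upwards [Metric.ball_mem_nhds (t, (0 : ℝ)) (half_pos hε)] with p hp
    have hpt : |p.1 - t| ≤ ε / 2 := by
      rw [Metric.mem_ball, Prod.dist_eq, max_lt_iff] at hp
      exact (Real.dist_eq _ _ ▸ hp.1).le
    filter_upwards [ae_le_abs_sub_of_abs_sub_le hae hpt] with x hx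
    have hsq : (ε / 2) ^ 2 ≤ (p.1 - x) ^ 2 := by
      rw [← sq_abs (p.1 - x)]
      exact pow_le_pow_left₀ (by positivity) (by linarith) 2
    rw [Real.norm_eq_abs, abs_of_nonneg (by positivity)]
    exact inv_anti₀ (by positivity) (by nlinarith [sq_nonneg p.2])
  · filter_upwards [hae] with x hx
    have hx0 : t - x ≠ 0 := abs_pos.1 (hε.trans_le hx)
    exact ContinuousAt.inv₀ (by fun_prop) (by positivity)

lemma continuousAt_integral_inv_sq [IsFiniteMeasure μ] (hε : 0 < ε)
    (hae : ∀ᵐ x ∂μ, ε ≤ |t - x|) :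
    ContinuousAt (fun u => ∫ x, ((u - x) ^ 2)⁻¹ ∂μ) t := by
  simpa [Function.comp_def] using (continuousAt_integral_inv_sq_add_sq hε hae).comp
    (f := fun u : ℝ => (u, (0 : ℝ))) (by fun_prop)

end Separation

section USet

variable {μ : Measure ℝ} {t : ℝ}

lemma vF_nonpos_of_integral_inv_sq_le_one (h : ∫ x, ((t - x) ^ 2)⁻¹ ∂μ ≤ 1) : vF μ t ≤ 0 :=
  csInf_le ⟨0, fun _ hv => hv.1⟩ ⟨le_rfl, by simpa using h⟩

lemma one_lt_integral_inv_sq_of_mem_USet (ht : t ∈ USet μ) : 1 < ∫ x, ((t - x) ^ 2)⁻¹ ∂μ :=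
  lt_of_not_ge fun h => (vF_nonpos_of_integral_inv_sq_le_one h).not_gt ht

lemma integral_inv_sq_add_one_le_one [IsProbabilityMeasure μ] (t : ℝ) :
    ∫ x, ((t - x) ^ 2 + 1 ^ 2)⁻¹ ∂μ ≤ 1 := by
  have hle : ∀ x : ℝ, ((t - x) ^ 2 + 1 ^ 2)⁻¹ ≤ 1 := fun x =>
    inv_le_one_of_one_le₀ (by nlinarith [sq_nonneg (t - x)])
  simpa using integral_mono_of_nonneg (Eventually.of_forall fun x => by positivity)
    (integrable_const (μ := μ) (1 : ℝ)) (Eventually.of_forall hle)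

lemma integral_inv_sq_le_one_of_notMem_USet [IsProbabilityMeasure μ] {ε : ℝ} (hε : 0 < ε)
    (hae : ∀ᵐ x ∂μ, ε ≤ |t - x|) (ht : t ∉ USet μ) : ∫ x, ((t - x) ^ 2)⁻¹ ∂μ ≤ 1 := by
  by_contra! h
  have hcont : ContinuousAt (fun v : ℝ => ∫ x, ((t - x) ^ 2 + v ^ 2)⁻¹ ∂μ) 0 :=
    (continuousAt_integral_inv_sq_add_sq hε hae).comp (f := fun v : ℝ => (t, v)) (by fun_prop)
  obtain ⟨η, hη, hball⟩ := Metric.eventually_nhds_iff.1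
    (hcont.eventually (Ioi_mem_nhds (by simpa using h)))
  have hηv : η ≤ vF μ t := by
    refine le_csInf ⟨1, zero_le_one, integral_inv_sq_add_one_le_one t⟩ fun v ⟨hv0, hv⟩ => ?_
    by_contra! hvη
    exact hv.not_gt (hball (by rwa [Real.dist_eq, sub_zero, abs_of_nonneg hv0]))
  exact ht (hη.trans_le hηv)

lemma integral_inv_sq_eq_one_of_mem_closure_USet [IsProbabilityMeasure μ] {ε : ℝ} (hε : 0 < ε)
    (hae : ∀ᵐ x ∂μ, ε ≤ |t - x|) (hcl : t ∈ closure (USet μ)) (ht : t ∉ USet μ) :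
    ∫ x, ((t - x) ^ 2)⁻¹ ∂μ = 1 := by
  have := mem_closure_iff_nhdsWithin_neBot.1 hcl
  refine le_antisymm (integral_inv_sq_le_one_of_notMem_USet hε hae ht) ?_
  exact ge_of_tendsto ((continuousAt_integral_inv_sq hε hae).tendsto.mono_left nhdsWithin_le_nhds)
    (eventually_nhdsWithin_of_forall fun u hu => (one_lt_integral_inv_sq_of_mem_USet hu).le)

end USet

/-- The gap is `s² (3a + 2s) / (a³ (a + s)²)`, positive because `3a + 2s` has the sign of `a`. -/
lemma inv_sq_sub_lt_inv_sq_add {a s : ℝ} (hs : 0 < s) (hsa : s < |a|) :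
    (a ^ 2)⁻¹ - 2 * s * (a ^ 3)⁻¹ < ((a + s) ^ 2)⁻¹ := by
  have hsign : 0 < (3 * a + 2 * s) * a ∧ 0 < (a + s) * a := by
    rcases le_or_gt 0 a with ha | ha
    · rw [abs_of_nonneg ha] at hsa
      constructor <;> nlinarith
    · rw [abs_of_neg ha] at hsa
      constructor <;> nlinarith
  have ha : a ≠ 0 := by rintro rfl; simp at hsign
  have has : a + s ≠ 0 := by intro h; simp [h] at hsign
  have key : ((a + s) ^ 2)⁻¹ - ((a ^ 2)⁻¹ - 2 * s * (a ^ 3)⁻¹)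
      = s ^ 2 * ((3 * a + 2 * s) * a) / (a ^ 4 * (a + s) ^ 2) := by
    field_simp
    ring
  rw [← sub_pos, key]
  have := hsign.1
  positivity

lemma integral_pos_of_ae_pos {α : Type*} [MeasurableSpace α] {μ : Measure α} [NeZero μ]
    {f : α → ℝ} (hfi : Integrable f μ) (hf : ∀ᵐ x ∂μ, 0 < f x) : 0 < ∫ x, f x ∂μ := by
  rw [integral_pos_iff_support_of_nonneg_ae (hf.mono fun _ hx => hx.le) hfi, pos_iff_ne_zero,
    ← frequently_ae_mem_iff]
  exact (hf.mono fun _ hx => hx.ne').frequently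

lemma integral_inv_cube_pos_of_integral_inv_sq_le {μ : Measure ℝ} [IsFiniteMeasure μ] [NeZero μ]
    {t ε s : ℝ} (hε : 0 < ε) (hae : ∀ᵐ x ∂μ, ε ≤ |t - x|) (hs : 0 < s) (hsε : s < ε)
    (hle : ∫ x, ((t + s - x) ^ 2)⁻¹ ∂μ ≤ ∫ x, ((t - x) ^ 2)⁻¹ ∂μ) :
    0 < ∫ x, ((t - x) ^ 3)⁻¹ ∂μ := by
  have haes : ∀ᵐ x ∂μ, ε - s ≤ |t + s - x| :=
    ae_le_abs_sub_of_abs_sub_le hae (by simp [abs_of_pos hs])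
  have hI2 := integrable_inv_pow_sub hε hae 2
  have hI3 := integrable_inv_pow_sub hε hae 3
  have hI2s := integrable_inv_pow_sub (sub_pos.2 hsε) haes 2
  have hsub : Integrable (fun x => ((t + s - x) ^ 2)⁻¹ - ((t - x) ^ 2)⁻¹) μ := hI2s.sub hI2
  have hgap : 0 < ∫ x, (((t + s - x) ^ 2)⁻¹ - ((t - x) ^ 2)⁻¹ + 2 * s * ((t - x) ^ 3)⁻¹) ∂μ := by
    refine integral_pos_of_ae_pos (hsub.add (hI3.const_mul _)) (hae.mono fun x hx => ?_)
    have := inv_sq_sub_lt_inv_sq_add hs (hsε.trans_le hx)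
    rw [show t + s - x = t - x + s by ring]
    linarith
  rw [integral_add hsub (hI3.const_mul _), integral_sub hI2s hI2, integral_const_mul] at hgap
  exact pos_of_mul_pos_right (by linarith) (by positivity : (0 : ℝ) ≤ 2 * s)

theorem stmt4_general (ν : Measure ℝ) [IsProbabilityMeasure ν]
    (t δ : ℝ) (ht : t ∉ MeasSupp ν) (hδ : 0 < δ)
    (h1 : Set.Ioo (t - δ) t ⊆ USet ν) (h2 : Set.Ico t (t + δ) ⊆ (USet ν)ᶜ) :
    ∫ x, ((t - x) ^ 2)⁻¹ ∂ν = 1 ∧ 0 < ∫ x, ((t - x) ^ 3)⁻¹ ∂ν := by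
  obtain ⟨ε, hε, hae⟩ := exists_ae_le_abs_sub_of_notMem_measSupp ht
  have htU : t ∉ USet ν := h2 ⟨le_rfl, by linarith⟩
  have hcl : t ∈ closure (USet ν) :=
    closure_mono h1 (by rw [closure_Ioo (by linarith)]; exact right_mem_Icc.2 (by linarith))
  have hG := integral_inv_sq_eq_one_of_mem_closure_USet hε hae hcl htU
  refine ⟨hG, ?_⟩
  set s := min (δ / 2) (ε / 2)
  have hs : 0 < s := lt_min (half_pos hδ) (half_pos hε)
  have hsε : s < ε := (min_le_right _ _).trans_lt (half_lt_self hε)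
  have hsδ : s < δ := (min_le_left _ _).trans_lt (half_lt_self hδ)
  refine integral_inv_cube_pos_of_integral_inv_sq_le hε hae hs hsε (hG ▸ ?_)
  exact integral_inv_sq_le_one_of_notMem_USet (sub_pos.2 hsε)
    (ae_le_abs_sub_of_abs_sub_le hae (by simp [abs_of_pos hs])) (h2 ⟨by linarith, by linarith⟩)

/-- if `t ∉ supp(ν)`, `]t−δ,t[ ⊆ U_ν` and `[t,t+δ[ ⊆ ℝ \ U_ν`, then
`∫ dν(x)/(t−x)² = 1` and `∫ dν(x)/(t−x)³ > 0`. -/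
theorem stmt4 (ν : Measure ℝ) [IsProbabilityMeasure ν] (hcomp : IsCompact (MeasSupp ν))
    (t δ : ℝ) (ht : t ∉ MeasSupp ν) (hδ : 0 < δ)
    (h1 : Set.Ioo (t - δ) t ⊆ USet ν) (h2 : Set.Ico t (t + δ) ⊆ (USet ν)ᶜ) :
    ∫ x, ((t - x) ^ 2)⁻¹ ∂ν = 1 ∧ 0 < ∫ x, ((t - x) ^ 3)⁻¹ ∂ν :=
  stmt4_general ν t δ ht hδ h1 h2
end

section
/- For every t ∈ U_ν such that t ∈ ℝ \ (supp(ν) ∪ Θ), Ψ_N(t) converges to Ψ_ν(t) as N → ∞. -/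
open MeasureTheory Filter Topology Set
open scoped ENNReal

/-- `ν̂_N = (1/(N−r)) Σ_{j=1}^{N−r} δ_{β_j(N)}`. -/
noncomputable def hatNu (r : ℕ) (β : ℕ → ℕ → ℝ) (N : ℕ) : Measure ℝ :=
  ((N - r : ℕ) : ℝ≥0∞)⁻¹ • ∑ i ∈ Finset.range (N - r), Measure.dirac (β N i)

/-!
Apart from `v_{μ_N}(t)`, `Ψ_N(t)` is the integral of a bounded continuous kernel. For `v > 0` the
map `v ↦ ∫ dμ(x)/((t-x)² + v²)` is strictly decreasing and passes to weak limits, so for any `v` on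
either side of `v_ν(t)` its strict comparison with `1` persists for large `N`; this squeezes
`v_{μ_N}(t)` to `v_ν(t)`. The kernel is unbounded only at `v = 0`, which matters only if `μ_N`
charges points near `t`, and eventually it does not: the spikes avoid `t` and the other eigenvalues
accumulate on `supp ν`. Finally, for `v` bounded away from `0`, the kernel of `Ψ` is Lipschitz in
`v` uniformly in `x`, so weak convergence also survives the moving parameter `v_{μ_N}(t)`.
-/

open Metric

-- `vF` and `PsiF` unfold definitionally to integrals of these two kernels.
noncomputable def denomInv (t v x : ℝ) : ℝ := ((t - x) ^ 2 + v ^ 2)⁻¹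

noncomputable def psiKernel (t v x : ℝ) : ℝ := (t - x) / ((t - x) ^ 2 + v ^ 2)

section Kernels

variable {t v w x δ : ℝ}

lemma measurable_denomInv (t v : ℝ) : Measurable (denomInv t v) := by
  unfold denomInv; fun_prop

lemma measurable_psiKernel (t v : ℝ) : Measurable (psiKernel t v) := by
  unfold psiKernel; fun_prop

lemma continuous_denomInv (t : ℝ) (hv : v ≠ 0) : Continuous (denomInv t v) :=
  (by fun_prop : Continuous fun x => (t - x) ^ 2 + v ^ 2).inv₀ fun _ => by positivity

lemma continuous_psiKernel (t : ℝ) (hv : v ≠ 0) : Continuous (psiKernel t v) :=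
  (by fun_prop : Continuous fun x => t - x).div (by fun_prop) fun _ => by positivity

lemma denomInv_nonneg (t v x : ℝ) : 0 ≤ denomInv t v x := by unfold denomInv; positivity

lemma denomInv_le_inv_sq (hv : 0 < v) : denomInv t v x ≤ (v ^ 2)⁻¹ :=
  inv_anti₀ (by positivity) (by nlinarith)

lemma denomInv_le_of_le_abs (hδ : 0 < δ) (hx : δ ≤ |t - x|) : denomInv t v x ≤ (δ ^ 2)⁻¹ := by
  have : δ ^ 2 ≤ (t - x) ^ 2 := by rw [← sq_abs (t - x)]; gcongr
  exact inv_anti₀ (by positivity) (by nlinarith)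

lemma denomInv_le_denomInv (h : 0 < (t - x) ^ 2 + w ^ 2) (hw : 0 ≤ w) (hwv : w ≤ v) :
    denomInv t v x ≤ denomInv t w x :=
  inv_anti₀ h (by nlinarith)

lemma denomInv_lt_denomInv (hw : 0 < w) (hwv : w < v) : denomInv t v x < denomInv t w x :=
  inv_strictAnti₀ (by positivity) (by nlinarith)

lemma abs_psiKernel_le (hv : 0 < v) : |psiKernel t v x| ≤ (2 * v)⁻¹ := by
  rw [psiKernel, abs_div, abs_of_pos (by positivity : 0 < (t - x) ^ 2 + v ^ 2),
    div_le_iff₀ (by positivity), ← sq_abs (t - x)]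
  field_simp
  nlinarith [sq_nonneg (|t - x| - v)]

lemma abs_psiKernel_sub_le (hv : 0 < v) (hw : 0 < w) :
    |psiKernel t v x - psiKernel t w x| ≤ |v ^ 2 - w ^ 2| / (2 * w * v ^ 2) := by
  have hdv : 0 < (t - x) ^ 2 + v ^ 2 := by positivity
  have hdw : 0 < (t - x) ^ 2 + w ^ 2 := by positivity
  have hsplit : psiKernel t v x - psiKernel t w x =
      psiKernel t w x * ((w ^ 2 - v ^ 2) * denomInv t v x) := by
    unfold psiKernel denomInv; field_simp; ring
  rw [hsplit, abs_mul, abs_mul, abs_sub_comm, abs_of_nonneg (denomInv_nonneg t v x)]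
  calc |psiKernel t w x| * (|v ^ 2 - w ^ 2| * denomInv t v x)
      ≤ (2 * w)⁻¹ * (|v ^ 2 - w ^ 2| * (v ^ 2)⁻¹) := by
        gcongr
        · exact mul_nonneg (abs_nonneg _) (denomInv_nonneg t v x)
        · exact abs_psiKernel_le hw
        · exact denomInv_le_inv_sq hv
    _ = |v ^ 2 - w ^ 2| / (2 * w * v ^ 2) := by field_simp

end Kernels

section VF

variable {μ : Measure ℝ} {t v δ : ℝ}

lemma ae_le_abs_sub_of_measure_ball_eq_zero (hμ : μ (ball t δ) = 0) :
    ∀ᵐ x ∂μ, δ ≤ |t - x| := by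
  filter_upwards [measure_eq_zero_iff_ae_notMem.1 hμ] with x hx
  rwa [mem_ball, Real.dist_eq, abs_sub_comm, not_lt] at hx

lemma integrable_denomInv_of_measure_ball_eq_zero [IsFiniteMeasure μ] (hδ : 0 < δ)
    (hμ : μ (ball t δ) = 0) (v : ℝ) : Integrable (denomInv t v) μ := by
  refine .of_bound (measurable_denomInv t v).aestronglyMeasurable (δ ^ 2)⁻¹ ?_
  filter_upwards [ae_le_abs_sub_of_measure_ball_eq_zero hμ] with x hx
  rw [Real.norm_of_nonneg (denomInv_nonneg t v x)]
  exact denomInv_le_of_le_abs hδ hx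

lemma integrable_denomInv [IsFiniteMeasure μ] (hv : 0 < v) : Integrable (denomInv t v) μ :=
  .of_bound (measurable_denomInv t v).aestronglyMeasurable _ <| ae_of_all _ fun x =>
    (Real.norm_of_nonneg (denomInv_nonneg t v x)).trans_le (denomInv_le_inv_sq hv)

lemma integrable_psiKernel [IsFiniteMeasure μ] (hv : 0 < v) : Integrable (psiKernel t v) μ :=
  .of_bound (measurable_psiKernel t v).aestronglyMeasurable _ <| ae_of_all _ fun _ =>
    abs_psiKernel_le hv

lemma vF_le (hv : 0 ≤ v) (h : ∫ x, denomInv t v x ∂μ ≤ 1) : vF μ t ≤ v :=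
  csInf_le ⟨0, fun _ hw => hw.1⟩ ⟨hv, h⟩

lemma one_lt_integral_denomInv_of_lt_vF (hv : 0 ≤ v) (h : v < vF μ t) :
    1 < ∫ x, denomInv t v x ∂μ := by
  by_contra! h'
  exact (vF_le hv h').not_gt h

variable [IsProbabilityMeasure μ]

lemma integral_denomInv_one_le_one (t : ℝ) : ∫ x, denomInv t 1 x ∂μ ≤ 1 := by
  calc ∫ x, denomInv t 1 x ∂μ ≤ ∫ _, (1 : ℝ) ∂μ :=
        integral_mono (integrable_denomInv one_pos) (integrable_const 1)
          fun x => by simpa using denomInv_le_inv_sq (t := t) (x := x) one_pos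
    _ = 1 := by simp

lemma le_vF_of_one_lt_integral (hδ : 0 < δ) (hμ : μ (ball t δ) = 0)
    (h : 1 < ∫ x, denomInv t v x ∂μ) : v ≤ vF μ t := by
  refine le_csInf ⟨1, zero_le_one, integral_denomInv_one_le_one t⟩ fun w ⟨hw, hwμ⟩ => ?_
  by_contra! hwv
  have hmono : ∫ x, denomInv t v x ∂μ ≤ ∫ x, denomInv t w x ∂μ := by
    refine integral_mono_ae (integrable_denomInv_of_measure_ball_eq_zero hδ hμ v)
      (integrable_denomInv_of_measure_ball_eq_zero hδ hμ w) ?_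
    filter_upwards [ae_le_abs_sub_of_measure_ball_eq_zero hμ] with x hx
    have : 0 < (t - x) ^ 2 := by rw [← sq_abs]; exact pow_pos (hδ.trans_le hx) 2
    exact denomInv_le_denomInv (by positivity) hw hwv.le
  exact (h.trans_le hmono).not_ge hwμ

lemma integral_denomInv_lt_one (ht : 0 < vF μ t) (hv : vF μ t < v) :
    ∫ x, denomInv t v x ∂μ < 1 := by
  obtain ⟨w, ⟨hw0, hwμ⟩, hwv⟩ :=
    exists_lt_of_csInf_lt (s := {v | 0 ≤ v ∧ ∫ x, denomInv t v x ∂μ ≤ 1})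
      ⟨1, zero_le_one, integral_denomInv_one_le_one t⟩ hv
  have hw : 0 < w := ht.trans_le (vF_le hw0 hwμ)
  have hintw := integrable_denomInv (μ := μ) (t := t) hw
  have hintv := integrable_denomInv (μ := μ) (t := t) (hw.trans hwv)
  have hpos : ∀ x, 0 < denomInv t w x - denomInv t v x := fun x =>
    sub_pos.2 (denomInv_lt_denomInv hw hwv)
  have hgap : 0 < ∫ x, (denomInv t w x - denomInv t v x) ∂μ := by
    rw [integral_pos_iff_support_of_nonneg (fun x => (hpos x).le) (hintw.sub hintv),
      Function.support_eq_univ fun x => (hpos x).ne']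
    simp
  rw [integral_sub hintw hintv] at hgap
  linarith

end VF

section WeakConvergence

variable {ι : Type*} {l : Filter ι} {μ : ι → Measure ℝ} {ν : Measure ℝ} {t : ℝ}

lemma tendsto_integral_of_continuous_of_abs_le
    (hweak : ∀ f : BoundedContinuousFunction ℝ ℝ,
      Tendsto (fun i => ∫ x, f x ∂(μ i)) l (𝓝 (∫ x, f x ∂ν)))
    {f : ℝ → ℝ} (hf : Continuous f) {C : ℝ} (hC : ∀ x, |f x| ≤ C) :
    Tendsto (fun i => ∫ x, f x ∂(μ i)) l (𝓝 (∫ x, f x ∂ν)) :=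
  hweak (.ofNormedAddCommGroup f hf C hC)

lemma tendsto_integral_denomInv
    (hweak : ∀ f : BoundedContinuousFunction ℝ ℝ,
      Tendsto (fun i => ∫ x, f x ∂(μ i)) l (𝓝 (∫ x, f x ∂ν)))
    {v : ℝ} (hv : 0 < v) :
    Tendsto (fun i => ∫ x, denomInv t v x ∂(μ i)) l (𝓝 (∫ x, denomInv t v x ∂ν)) :=
  tendsto_integral_of_continuous_of_abs_le hweak (continuous_denomInv t hv.ne')
    fun x => (abs_of_nonneg (denomInv_nonneg t v x)).trans_le (denomInv_le_inv_sq hv)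

theorem tendsto_vF [∀ i, IsProbabilityMeasure (μ i)] [IsProbabilityMeasure ν]
    (hweak : ∀ f : BoundedContinuousFunction ℝ ℝ,
      Tendsto (fun i => ∫ x, f x ∂(μ i)) l (𝓝 (∫ x, f x ∂ν)))
    {δ : ℝ} (hδ : 0 < δ) (hfar : ∀ᶠ i in l, μ i (ball t δ) = 0) (ht : 0 < vF ν t) :
    Tendsto (fun i => vF (μ i) t) l (𝓝 (vF ν t)) := by
  refine tendsto_order.2 ⟨fun a ha => ?_, fun a ha => ?_⟩
  · obtain ⟨v, hav, hv⟩ := exists_between (max_lt ha ht)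
    have hv0 : 0 < v := (le_max_right a 0).trans_lt hav
    have hlim := (tendsto_integral_denomInv hweak hv0).eventually
      (eventually_gt_nhds (one_lt_integral_denomInv_of_lt_vF hv0.le hv))
    filter_upwards [hlim, hfar] with i hi hμi
    exact ((le_max_left a 0).trans_lt hav).trans_le (le_vF_of_one_lt_integral hδ hμi hi)
  · obtain ⟨v, hv, hva⟩ := exists_between ha
    have hv0 : 0 < v := ht.trans hv
    have hlim := (tendsto_integral_denomInv hweak hv0).eventually
      (eventually_lt_nhds (integral_denomInv_lt_one ht hv))
    filter_upwards [hlim] with i hi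
    exact (vF_le hv0.le hi.le).trans_lt hva

theorem tendsto_integral_psiKernel [∀ i, IsProbabilityMeasure (μ i)]
    (hweak : ∀ f : BoundedContinuousFunction ℝ ℝ,
      Tendsto (fun i => ∫ x, f x ∂(μ i)) l (𝓝 (∫ x, f x ∂ν)))
    {v : ι → ℝ} {v₀ : ℝ} (hv₀ : 0 < v₀) (hv : Tendsto v l (𝓝 v₀)) :
    Tendsto (fun i => ∫ x, psiKernel t (v i) x ∂(μ i)) l (𝓝 (∫ x, psiKernel t v₀ x ∂ν)) := by
  have hlim : Tendsto (fun i => ∫ x, psiKernel t v₀ x ∂(μ i)) l (𝓝 (∫ x, psiKernel t v₀ x ∂ν)) :=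
    tendsto_integral_of_continuous_of_abs_le hweak (continuous_psiKernel t hv₀.ne')
      fun _ => abs_psiKernel_le hv₀
  have hbound : Tendsto (fun i => |v₀ ^ 2 - v i ^ 2| / (2 * v i * v₀ ^ 2)) l (𝓝 0) := by
    have := (((hv.pow 2).const_sub (v₀ ^ 2)).abs).div ((hv.const_mul 2).mul_const (v₀ ^ 2))
      (by positivity)
    rwa [sub_self, abs_zero, zero_div] at this
  refine hlim.congr_dist (squeeze_zero' (.of_forall fun _ => dist_nonneg) ?_ hbound)
  filter_upwards [hv.eventually (eventually_gt_nhds hv₀)] with i hvi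
  rw [dist_eq_norm, ← integral_sub (integrable_psiKernel hv₀) (integrable_psiKernel hvi)]
  simpa using norm_integral_le_of_norm_le_const (μ := μ i)
    (f := fun x => psiKernel t v₀ x - psiKernel t (v i) x)
    (ae_of_all _ fun x => abs_psiKernel_sub_le hv₀ hvi)

end WeakConvergence

lemma measSupp_eq_support_s8 (ν : Measure ℝ) : MeasSupp ν = ν.support := by
  ext x
  simp [MeasSupp, Measure.mem_support_iff_forall, pos_iff_ne_zero]

lemma notMem_ball_of_infDist_lt {X : Type*} [PseudoMetricSpace X] {S : Set X} (hne : S.Nonempty)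
    {t y : X} {δ : ℝ} (hS : ∀ s ∈ S, 2 * δ ≤ dist t s) (hy : infDist y S < δ) :
    y ∉ ball t δ := by
  obtain ⟨s, hs, hys⟩ := (infDist_lt_iff hne).1 hy
  rw [mem_ball, not_lt]
  linarith [hS s hs, dist_triangle t y s, dist_comm y t]

lemma eventually_measure_ball_eq_zero (ν : Measure ℝ) [IsProbabilityMeasure ν]
    {J r : ℕ} {θ : Fin J → ℝ} {k : Fin J → ℕ} {β : ℕ → ℕ → ℝ} {μA : ℕ → Measure ℝ}
    (hdecomp : ∀ N, r ≤ N → μA N = (N : ℝ≥0∞)⁻¹ •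
      ((∑ j, (k j : ℝ≥0∞) • Measure.dirac (θ j)) +
        ∑ i ∈ Finset.range (N - r), Measure.dirac (β N i)))
    (hβ : ∀ ε > 0, ∀ᶠ N in atTop, ∀ i ∈ Finset.range (N - r),
      Metric.infDist (β N i) (MeasSupp ν) < ε)
    {t : ℝ} (ht : t ∉ MeasSupp ν ∪ Set.range θ) :
    ∃ δ > 0, ∀ᶠ N in atTop, μA N (ball t δ) = 0 := by
  have hclosed : IsClosed (MeasSupp ν ∪ range θ) := by
    rw [measSupp_eq_support_s8]
    exact Measure.isClosed_support.union (finite_range θ).isClosed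
  obtain ⟨ε, hε, hball⟩ := Metric.mem_nhds_iff.1 (hclosed.isOpen_compl.mem_nhds ht)
  have hsep : ∀ s ∈ MeasSupp ν ∪ range θ, 2 * (ε / 2) ≤ dist t s := fun s hs => by
    rw [mul_div_cancel₀ ε two_ne_zero]
    by_contra! h
    exact hball (by rwa [mem_ball, dist_comm]) hs
  have hne : (MeasSupp ν).Nonempty := by
    rw [measSupp_eq_support_s8]
    exact Measure.nonempty_support (IsProbabilityMeasure.ne_zero ν)
  refine ⟨ε / 2, half_pos hε, ?_⟩
  filter_upwards [hβ (ε / 2) (half_pos hε), eventually_ge_atTop r] with N hN hrN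
  have hθ : ∀ j, θ j ∉ ball t (ε / 2) := fun j hj =>
    hball (ball_subset_ball (half_le_self hε.le) hj) (Or.inr ⟨j, rfl⟩)
  have hβN : ∀ i ∈ Finset.range (N - r), β N i ∉ ball t (ε / 2) := fun i hi =>
    notMem_ball_of_infDist_lt hne (fun s hs => hsep s (Or.inl hs)) (hN i hi)
  rw [hdecomp N hrN]
  simpa [Measure.dirac_apply' _ measurableSet_ball, hθ] using hβN

theorem stmt8_general
    (ν : Measure ℝ) [IsProbabilityMeasure ν]
    (J r : ℕ) (θ : Fin J → ℝ) (k : Fin J → ℕ)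
    (β : ℕ → ℕ → ℝ) (μA : ℕ → Measure ℝ)
    (hprob : ∀ N, IsProbabilityMeasure (μA N))
    (hdecomp : ∀ N, r ≤ N → μA N = (N : ℝ≥0∞)⁻¹ •
      ((∑ j, (k j : ℝ≥0∞) • Measure.dirac (θ j)) +
        ∑ i ∈ Finset.range (N - r), Measure.dirac (β N i)))
    (hweak : ∀ f : BoundedContinuousFunction ℝ ℝ,
      Tendsto (fun N => ∫ x, f x ∂(μA N)) atTop (𝓝 (∫ x, f x ∂ν)))
    (hβ : ∀ ε > 0, ∀ᶠ N in atTop, ∀ i ∈ Finset.range (N - r),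
      Metric.infDist (β N i) (MeasSupp ν) < ε)
    (t : ℝ) (ht : t ∈ USet ν) (ht' : t ∉ MeasSupp ν ∪ Set.range θ) :
    Tendsto (fun N => PsiF (μA N) t) atTop (𝓝 (PsiF ν t)) := by
  obtain ⟨δ, hδ, hfar⟩ := eventually_measure_ball_eq_zero ν hdecomp hβ ht'
  have hv := tendsto_vF hweak hδ hfar ht
  exact (tendsto_integral_psiKernel hweak ht hv).const_add t

/-- for every `t ∈ U_ν` with `t ∉ supp(ν) ∪ Θ`, `Ψ_N(t) → Ψ_ν(t)`. -/
theorem stmt8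
    (ν : Measure ℝ) [IsProbabilityMeasure ν] (hcomp : IsCompact (MeasSupp ν))
    (J r : ℕ) (θ : Fin J → ℝ) (k : Fin J → ℕ)
    (hθanti : StrictAnti θ) (hθsupp : ∀ j, θ j ∉ MeasSupp ν)
    (hkpos : ∀ j, 0 < k j) (hkr : ∑ j, k j = r)
    (β : ℕ → ℕ → ℝ) (μA : ℕ → Measure ℝ)
    (hprob : ∀ N, IsProbabilityMeasure (μA N))
    (hdecomp : ∀ N, r ≤ N → μA N = (N : ℝ≥0∞)⁻¹ •
      ((∑ j, (k j : ℝ≥0∞) • Measure.dirac (θ j)) +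
        ∑ i ∈ Finset.range (N - r), Measure.dirac (β N i)))
    (hweak : ∀ f : BoundedContinuousFunction ℝ ℝ,
      Tendsto (fun N => ∫ x, f x ∂(μA N)) atTop (𝓝 (∫ x, f x ∂ν)))
    (hβ : ∀ ε > 0, ∀ᶠ N in atTop, ∀ i ∈ Finset.range (N - r),
      Metric.infDist (β N i) (MeasSupp ν) < ε)
    (t : ℝ) (ht : t ∈ USet ν) (ht' : t ∉ MeasSupp ν ∪ Set.range θ) :
    Tendsto (fun N => PsiF (μA N) t) atTop (𝓝 (PsiF ν t)) :=
  stmt8_general ν J r θ k β μA hprob hdecomp hweak hβ t ht ht'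
end
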